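/- Acceptance equivalence for the constructed recognizer PDA: for any terminal string w ∈ Σ*, ({(L₀, L₀)}, ⊥) ⇝ w if and only if w is accepted by the recognizer PDA constructed from G (i.e., there is a sequence of configurations starting at ({(L₀, L₀)}, ⊥), each obtained from the previous by the derivative transition for the corresponding input symbol of w, ending in an acceptance configuration). -/

import Mathlib

namespace VPG

/-- Terminals of a visibly pushdown grammar: plain, call, and return symbols. -/
inductive VTerm (Pl Ca Re : Type) : Type
  | pl : Pl → VTerm Pl Ca Re
  | ca : Ca → VTerm Pl Ca Re
  | re : Re → VTerm Pl Ca Re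

/-- Grammar symbols: terminals or nonterminals. -/
inductive VSym (N Pl Ca Re : Type) : Type
  | t : VTerm Pl Ca Re → VSym N Pl Ca Re
  | nt : N → VSym N Pl Ca Re

/-- Production rules of a well-matched VPG. -/
inductive WRule (N Pl Ca Re : Type) : Type
  | eps (L : N)
  | plain (L : N) (c : Pl) (L1 : N)
  | mat (L : N) (a : Ca) (L1 : N) (b : Re) (L2 : N)

variable {N Pl Ca Re : Type}

def WRule.lhs : WRule N Pl Ca Re → N
  | .eps L => L
  | .plain L _ _ => L
  | .mat L _ _ _ _ => L

def WRule.rhs : WRule N Pl Ca Re → List (VSym N Pl Ca Re)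
  | .eps _ => []
  | .plain _ c L1 => [.t (.pl c), .nt L1]
  | .mat _ a L1 b L2 => [.t (.ca a), .nt L1, .t (.re b), .nt L2]

/-- One derivation step of the context-free derivation relation. -/
inductive Derives1 (P : Set (WRule N Pl Ca Re)) :
    List (VSym N Pl Ca Re) → List (VSym N Pl Ca Re) → Prop
  | step (r : WRule N Pl Ca Re) (hr : r ∈ P) (pre post : List (VSym N Pl Ca Re)) :
      Derives1 P (pre ++ VSym.nt r.lhs :: post) (pre ++ r.rhs ++ post)

/-- The usual (reflexive-transitive) context-free derivation relation. -/
def Derives (P : Set (WRule N Pl Ca Re)) :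
    List (VSym N Pl Ca Re) → List (VSym N Pl Ca Re) → Prop :=
  Relation.ReflTransGen (Derives1 P)

/-- `L →* w` for a terminal string `w`. -/
def DerivesStr (P : Set (WRule N Pl Ca Re)) (L : N) (w : List (VTerm Pl Ca Re)) : Prop :=
  Derives P [VSym.nt L] (w.map VSym.t)

/-- A PDA state: a set of pairs of nonterminals. -/
abbrev PState (N : Type) := Set (N × N)

/-- A PDA stack: a list of stack symbols `[S, ‹a]` (`[]` is the empty stack `⊥`). -/
abbrev PStack (N Ca : Type) := List (PState N × Ca)

/-- Acceptance `(S, T) ⇝ w` of a terminal string by a configuration. -/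
inductive Accepts (P : Set (WRule N Pl Ca Re)) :
    PState N → PStack N Ca → List (VTerm Pl Ca Re) → Prop
  | bot {S : PState N} {w : List (VTerm Pl Ca Re)} (L1 L2 : N)
      (h : (L1, L2) ∈ S) (hd : DerivesStr P L2 w) :
      Accepts P S [] w
  | push {S S' : PState N} {a : Ca} {T' : PStack N Ca}
      {w1 w2 : List (VTerm Pl Ca Re)} (b : Re) (L1 L2 L3 L4 L5 : N)
      (h34 : (L3, L4) ∈ S) (hd : DerivesStr P L4 w1)
      (h12 : (L1, L2) ∈ S') (hrule : WRule.mat L2 a L3 b L5 ∈ P)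
      (hrec : Accepts P {(L1, L5)} T' w2) :
      Accepts P S ((S', a) :: T') (w1 ++ VTerm.re b :: w2)

/-- The derivative function for a plain symbol `c` (state part). -/
def deltaPlain (P : Set (WRule N Pl Ca Re)) (c : Pl) (S : PState N) : PState N :=
  { q | ∃ L2, (q.1, L2) ∈ S ∧ WRule.plain L2 c q.2 ∈ P }

/-- The derivative function for a call symbol `‹a` (state part). -/
def deltaCall (P : Set (WRule N Pl Ca Re)) (a : Ca) (S : PState N) : PState N :=
  { q | ∃ L1 L2 L3 L4 b, q = (L3, L3) ∧ (L1, L2) ∈ S ∧ WRule.mat L2 a L3 b L4 ∈ P }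

/-- The derivative function for a return symbol `b›` with stack top `[S1, ‹a]` (state part). -/
def deltaRet (P : Set (WRule N Pl Ca Re)) (b : Re) (S S1 : PState N) (a : Ca) : PState N :=
  { q | ∃ L1 L2 L3 L4 L5, q = (L1, L5) ∧ (L1, L2) ∈ S1 ∧ (L3, L4) ∈ S ∧
      WRule.eps L4 ∈ P ∧ WRule.mat L2 a L3 b L5 ∈ P }

/-- One transition of the recognizer PDA (derivative transition). -/
def step (P : Set (WRule N Pl Ca Re)) (cfg : PState N × PStack N Ca) (i : VTerm Pl Ca Re) :
    Option (PState N × PStack N Ca) :=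
  match i, cfg with
  | .pl c, (S, T) => some (deltaPlain P c S, T)
  | .ca a, (S, T) => some (deltaCall P a S, (S, a) :: T)
  | .re b, (S, (S1, a) :: T) => some (deltaRet P b S S1 a, T)
  | .re _, (_, []) => none

/-- Running the recognizer PDA on an input string. -/
def run (P : Set (WRule N Pl Ca Re)) :
    List (VTerm Pl Ca Re) → PState N × PStack N Ca → Option (PState N × PStack N Ca)
  | [], cfg => some cfg
  | i :: w, cfg =>
    match step P cfg i with
    | none => none
    | some cfg' => run P w cfg'

/-- An acceptance configuration: empty stack and some `(L, L') ∈ S` with `L' → ε`. -/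
def AccConfig (P : Set (WRule N Pl Ca Re)) (cfg : PState N × PStack N Ca) : Prop :=
  cfg.2 = [] ∧ ∃ L L', (L, L') ∈ cfg.1 ∧ WRule.eps L' ∈ P

/-- Acceptance of a string by the recognizer PDA constructed from the grammar. -/
def PDAAccepts (P : Set (WRule N Pl Ca Re)) (L0 : N) (w : List (VTerm Pl Ca Re)) : Prop :=
  ∃ cfg, run P w ({(L0, L0)}, []) = some cfg ∧ AccConfig P cfg



/-! ### Auxiliary lemmas about derivations -/

variable {P : Set (WRule N Pl Ca Re)}

lemma Derives1.append_left {α β : List (VSym N Pl Ca Re)} (h : Derives1 P α β)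
    (γ : List (VSym N Pl Ca Re)) : Derives1 P (γ ++ α) (γ ++ β) := by
  cases h with
  | step r hr pre post =>
    simpa [List.append_assoc] using Derives1.step (P := P) r hr (γ ++ pre) post

lemma Derives1.append_right {α β : List (VSym N Pl Ca Re)} (h : Derives1 P α β)
    (γ : List (VSym N Pl Ca Re)) : Derives1 P (α ++ γ) (β ++ γ) := by
  cases h with
  | step r hr pre post =>
    simpa [List.append_assoc] using Derives1.step (P := P) r hr pre (post ++ γ)

lemma Derives.append_left {α β : List (VSym N Pl Ca Re)} (h : Derives P α β)
    (γ : List (VSym N Pl Ca Re)) : Derives P (γ ++ α) (γ ++ β) :=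
  Relation.ReflTransGen.lift (γ ++ ·) (fun a b (h : Derives1 P a b) => h.append_left γ) _ _ h

lemma Derives.append_right {α β : List (VSym N Pl Ca Re)} (h : Derives P α β)
    (γ : List (VSym N Pl Ca Re)) : Derives P (α ++ γ) (β ++ γ) :=
  Relation.ReflTransGen.lift (· ++ γ) (fun a b (h : Derives1 P a b) => h.append_right γ) _ _ h

lemma Derives.append {α α' β β' : List (VSym N Pl Ca Re)}
    (h1 : Derives P α α') (h2 : Derives P β β') : Derives P (α ++ β) (α' ++ β') :=
  Relation.ReflTransGen.trans (h1.append_right β) (h2.append_left α')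

lemma Derives1.exists_nt {α β : List (VSym N Pl Ca Re)} (h : Derives1 P α β) :
    ∃ L, VSym.nt L ∈ α := by
  cases h with
  | step r hr pre post => exact ⟨r.lhs, by simp⟩

lemma not_derives1_terminal {w : List (VTerm Pl Ca Re)} {β : List (VSym N Pl Ca Re)} :
    ¬ Derives1 P (w.map VSym.t) β := by
  intro h
  obtain ⟨L, hL⟩ := h.exists_nt
  simp at hL

lemma derives1_iff {α β : List (VSym N Pl Ca Re)} :
    Derives1 P α β ↔ ∃ r ∈ P, ∃ pre post,
      α = pre ++ VSym.nt r.lhs :: post ∧ β = pre ++ r.rhs ++ post := by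
  constructor
  · intro h
    cases h with
    | step r hr pre post => exact ⟨r, hr, pre, post, rfl, rfl⟩
  · rintro ⟨r, hr, pre, post, rfl, rfl⟩
    exact Derives1.step r hr pre post

lemma derives_terminal_eq {w : List (VTerm Pl Ca Re)} {u : List (VSym N Pl Ca Re)}
    (h : Derives P (w.map VSym.t) u) : u = w.map VSym.t := by
  rcases h.cases_head with h | ⟨c, h1, _⟩
  · exact h.symm
  · exact absurd h1 not_derives1_terminal

/-- Splitting a derivation of a terminal string from a concatenation. -/
lemma derives_split {γ : List (VSym N Pl Ca Re)} {w : List (VTerm Pl Ca Re)}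
    (h : Derives P γ (w.map VSym.t)) :
    ∀ α β, γ = α ++ β → ∃ w1 w2, w = w1 ++ w2 ∧
      Derives P α (w1.map VSym.t) ∧ Derives P β (w2.map VSym.t) := by
  induction h using Relation.ReflTransGen.head_induction_on with
  | refl =>
    intro α β hγ
    obtain ⟨w1, w2, hw, h1, h2⟩ := List.map_eq_append_iff.mp hγ
    exact ⟨w1, w2, hw, by rw [← h1]; exact Relation.ReflTransGen.refl, by rw [← h2]; exact Relation.ReflTransGen.refl⟩
  | head hstep hrest ih =>
    intro α β hγ
    obtain ⟨r, hr, pre, post, h1, h2⟩ := derives1_iff.mp hstep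
    rw [h1] at hγ
    subst h2
    rcases List.append_eq_append_iff.mp hγ.symm with ⟨mid, hpre, hβ⟩ | ⟨mid, hα, hmid⟩
    · -- pre = α ++ mid, β = mid ++ nt :: post : nonterminal lies in β
      obtain ⟨w1, w2, hw, hd1, hd2⟩ := ih α (mid ++ r.rhs ++ post)
        (by rw [hpre]; simp [List.append_assoc])
      exact ⟨w1, w2, hw, hd1, Relation.ReflTransGen.head
        (hβ ▸ Derives1.step r hr mid post) hd2⟩
    · cases mid with
      | nil =>
        -- α = pre, β = nt :: post
        simp only [List.append_nil] at hα
        have hβ' : β = VSym.nt r.lhs :: post := by simpa using hmid.symm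
        obtain ⟨w1, w2, hw, hd1, hd2⟩ := ih α (r.rhs ++ post)
          (by rw [hα]; simp [List.append_assoc])
        refine ⟨w1, w2, hw, hd1, Relation.ReflTransGen.head ?_ hd2⟩
        rw [hβ']
        simpa using Derives1.step (P := P) r hr [] post
      | cons x mid' =>
        rw [List.cons_append] at hmid
        injection hmid with hx hpost
        obtain ⟨w1, w2, hw, hd1, hd2⟩ := ih (pre ++ r.rhs ++ mid') β
          (by rw [hpost]; simp [List.append_assoc])
        refine ⟨w1, w2, hw, Relation.ReflTransGen.head ?_ hd1, hd2⟩
        have hα' : α = pre ++ VSym.nt r.lhs :: mid' := by rw [hα, hx]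
        rw [hα']
        exact Derives1.step r hr pre mid'

lemma derives1_singleton_nt {L : N} {c : List (VSym N Pl Ca Re)}
    (h : Derives1 P [VSym.nt L] c) : ∃ r ∈ P, r.lhs = L ∧ c = r.rhs := by
  obtain ⟨r, hr, pre, post, h1, h2⟩ := derives1_iff.mp h
  match pre, h1 with
  | [], h1 =>
    have hL : VSym.nt (N := N) (Pl := Pl) (Ca := Ca) (Re := Re) r.lhs = VSym.nt L ∧ post = [] := by
      simpa using h1.symm
    obtain ⟨hL1, hL2⟩ := hL
    injection hL1 with hL1
    exact ⟨r, hr, hL1, by simp [h2, hL2]⟩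
  | x :: pre', h1 =>
    exfalso
    simp only [List.cons_append] at h1
    have := congrArg List.length h1
    simp at this

/-- Head analysis of a derivation from a single nonterminal. -/
lemma derives_nt_cases {L : N} {u : List (VSym N Pl Ca Re)}
    (h : Derives P [VSym.nt L] u) :
    u = [VSym.nt L] ∨ ∃ r ∈ P, r.lhs = L ∧ Derives P r.rhs u := by
  rcases h.cases_head with h | ⟨c, h1, h2⟩
  · exact Or.inl h.symm
  · obtain ⟨r, hr, hlhs, hc⟩ := derives1_singleton_nt h1
    exact Or.inr ⟨r, hr, hlhs, hc ▸ h2⟩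

/-! ### Characterization of `DerivesStr` -/

lemma derivesStr_nil_iff {L : N} :
    DerivesStr P L ([] : List (VTerm Pl Ca Re)) ↔ WRule.eps L ∈ P := by
  constructor
  · intro h
    rcases derives_nt_cases h with h | ⟨r, hr, hlhs, hd⟩
    · simp at h
    · cases r with
      | eps L' => exact hlhs ▸ hr
      | plain L' c L1 =>
        exfalso
        obtain ⟨w1, w2, hw, h1, h2⟩ := derives_split hd [VSym.t (VTerm.pl c)] [VSym.nt L1] rfl
        have := derives_terminal_eq (w := [VTerm.pl c]) h1
        simp at hw
        rw [hw.1] at this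
        simp at this
      | mat L' a L1 b L2 =>
        exfalso
        obtain ⟨w1, w2, hw, h1, h2⟩ := derives_split hd [VSym.t (VTerm.ca a)]
          [VSym.nt L1, VSym.t (VTerm.re b), VSym.nt L2] rfl
        have := derives_terminal_eq (w := [VTerm.ca a]) h1
        simp at hw
        rw [hw.1] at this
        simp at this
  · intro h
    exact Relation.ReflTransGen.single
      (by simpa [WRule.lhs, WRule.rhs] using Derives1.step (WRule.eps L) h [] [])

lemma derivesStr_pl_iff {L : N} {c : Pl} {w : List (VTerm Pl Ca Re)} :
    DerivesStr P L (VTerm.pl c :: w) ↔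
      ∃ L1, WRule.plain L c L1 ∈ P ∧ DerivesStr P L1 w := by
  constructor
  · intro h
    rcases derives_nt_cases h with h | ⟨r, hr, hlhs, hd⟩
    · simp at h
    · cases r with
      | eps L' => simp [WRule.rhs] at hd; exact absurd (derives_terminal_eq (w := []) hd) (by simp)
      | plain L' c' L1 =>
        obtain ⟨w1, w2, hw, h1, h2⟩ := derives_split hd [VSym.t (VTerm.pl c')] [VSym.nt L1] rfl
        have h1' := derives_terminal_eq (w := [VTerm.pl c']) h1
        rcases w1 with _ | ⟨x, w1⟩
        · simp at h1'
        · simp at h1'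
          obtain ⟨hx, hw1⟩ := h1'
          subst hx hw1
          simp at hw
          obtain ⟨hc, hww⟩ := hw
          subst hc hww
          exact ⟨L1, hlhs ▸ hr, h2⟩
      | mat L' a L1 b L2 =>
        exfalso
        obtain ⟨w1, w2, hw, h1, h2⟩ := derives_split hd [VSym.t (VTerm.ca a)]
          [VSym.nt L1, VSym.t (VTerm.re b), VSym.nt L2] rfl
        have h1' := derives_terminal_eq (w := [VTerm.ca a]) h1
        rcases w1 with _ | ⟨x, w1⟩
        · simp at h1'
        · simp at h1'
          obtain ⟨hx, hw1⟩ := h1'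
          subst hx hw1
          simp at hw
  · rintro ⟨L1, hrule, hd⟩
    have step1 : Derives1 P [VSym.nt L] [VSym.t (VTerm.pl c), VSym.nt L1] := by
      simpa [WRule.lhs, WRule.rhs] using Derives1.step (WRule.plain L c L1) hrule [] []
    refine Relation.ReflTransGen.head step1 ?_
    have := hd.append_left [VSym.t (VTerm.pl c)]
    simpa [Derives] using this

lemma derivesStr_ca_iff {L : N} {a : Ca} {w : List (VTerm Pl Ca Re)} :
    DerivesStr P L (VTerm.ca a :: w) ↔
      ∃ L1 b L2 w1 w2, WRule.mat L a L1 b L2 ∈ P ∧ w = w1 ++ VTerm.re b :: w2 ∧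
        DerivesStr P L1 w1 ∧ DerivesStr P L2 w2 := by
  constructor
  · intro h
    rcases derives_nt_cases h with h | ⟨r, hr, hlhs, hd⟩
    · simp at h
    · cases r with
      | eps L' => simp [WRule.rhs] at hd; exact absurd (derives_terminal_eq (w := []) hd) (by simp)
      | plain L' c' L1 =>
        exfalso
        obtain ⟨w1, w2, hw, h1, h2⟩ := derives_split hd [VSym.t (VTerm.pl c')] [VSym.nt L1] rfl
        have h1' := derives_terminal_eq (w := [VTerm.pl c']) h1
        rcases w1 with _ | ⟨x, w1⟩
        · simp at h1'
        · simp at h1'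
          obtain ⟨hx, hw1⟩ := h1'
          subst hx hw1
          simp at hw
      | mat L' a' L1 b L2 =>
        obtain ⟨w1, w2, hw, h1, h2⟩ := derives_split hd [VSym.t (VTerm.ca a')]
          ([VSym.nt L1, VSym.t (VTerm.re b)] ++ [VSym.nt L2]) rfl
        obtain ⟨u1, u2, hw2, h21, h22⟩ := derives_split h2
          [VSym.nt L1, VSym.t (VTerm.re b)] [VSym.nt L2] rfl
        obtain ⟨v1, v2, hu1, h211, h212⟩ := derives_split h21 [VSym.nt L1]
          [VSym.t (VTerm.re b)] rfl
        have h1' := derives_terminal_eq (w := [VTerm.ca a']) h1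
        rcases w1 with _ | ⟨x, w1⟩
        · simp at h1'
        · simp at h1'
          obtain ⟨hx, hw1⟩ := h1'
          subst hx hw1
          have h212' := derives_terminal_eq (w := [VTerm.re b]) h212
          rcases v2 with _ | ⟨y, v2⟩
          · simp at h212'
          · simp at h212'
            obtain ⟨hy, hv2⟩ := h212'
            subst hy hv2
            simp at hw
            obtain ⟨ha, hww⟩ := hw
            subst ha
            exact ⟨L1, b, L2, v1, u2, hlhs ▸ hr,
              by rw [hww, hw2, hu1]; simp, h211, h22⟩
  · rintro ⟨L1, b, L2, w1, w2, hrule, hw, hd1, hd2⟩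
    subst hw
    have step1 : Derives1 P [VSym.nt L]
        ([VSym.t (VTerm.ca a)] ++ [VSym.nt L1] ++ [VSym.t (VTerm.re b)] ++ [VSym.nt L2]) := by
      simpa [WRule.lhs, WRule.rhs] using Derives1.step (WRule.mat L a L1 b L2) hrule [] []
    refine Relation.ReflTransGen.head step1 ?_
    have hmid : Derives P ([VSym.t (VTerm.ca a)] ++ [VSym.nt L1] ++ [VSym.t (VTerm.re b)] ++ [VSym.nt L2])
        ([VSym.t (VTerm.ca a)] ++ w1.map VSym.t ++ [VSym.t (VTerm.re b)] ++ w2.map VSym.t) :=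
      (Derives.append (Derives.append (Derives.append
        (Relation.ReflTransGen.refl) hd1)
        (Relation.ReflTransGen.refl : Derives P [VSym.t (VTerm.re b)] _)) hd2)
    simpa [List.append_assoc, Derives] using hmid

lemma not_derivesStr_re {L : N} {b : Re} {w : List (VTerm Pl Ca Re)} :
    ¬ DerivesStr P L (VTerm.re b :: w) := by
  intro h
  rcases derives_nt_cases h with h | ⟨r, hr, hlhs, hd⟩
  · simp at h
  · cases r with
    | eps L' => simp [WRule.rhs] at hd; exact absurd (derives_terminal_eq (w := []) hd) (by simp)
    | plain L' c' L1 =>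
      obtain ⟨w1, w2, hw, h1, h2⟩ := derives_split hd [VSym.t (VTerm.pl c')] [VSym.nt L1] rfl
      have h1' := derives_terminal_eq (w := [VTerm.pl c']) h1
      rcases w1 with _ | ⟨x, w1⟩
      · simp at h1'
      · simp at h1'
        obtain ⟨hx, hw1⟩ := h1'
        subst hx hw1
        simp at hw
    | mat L' a' L1 b' L2 =>
      obtain ⟨w1, w2, hw, h1, h2⟩ := derives_split hd [VSym.t (VTerm.ca a')]
        [VSym.nt L1, VSym.t (VTerm.re b'), VSym.nt L2] rfl
      have h1' := derives_terminal_eq (w := [VTerm.ca a']) h1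
      rcases w1 with _ | ⟨x, w1⟩
      · simp at h1'
      · simp at h1'
        obtain ⟨hx, hw1⟩ := h1'
        subst hx hw1
        simp at hw

/-! ### Lemmas about `Accepts` -/

lemma Accepts.mono {S S' : PState N} {T : PStack N Ca} {w : List (VTerm Pl Ca Re)}
    (hS : S ⊆ S') (h : Accepts P S T w) : Accepts P S' T w := by
  cases h with
  | bot L1 L2 h hd => exact Accepts.bot L1 L2 (hS h) hd
  | push b L1 L2 L3 L4 L5 h34 hd h12 hrule hrec =>
    exact Accepts.push b L1 L2 L3 L4 L5 (hS h34) hd h12 hrule hrec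

lemma accepts_inv {S : PState N} {T : PStack N Ca} {w : List (VTerm Pl Ca Re)}
    (h : Accepts P S T w) :
    (T = [] ∧ ∃ L1 L2, (L1, L2) ∈ S ∧ DerivesStr P L2 w) ∨
    (∃ S' a T' w1 b w2 L1 L2 L3 L4 L5, T = (S', a) :: T' ∧ w = w1 ++ VTerm.re b :: w2 ∧
      (L3, L4) ∈ S ∧ DerivesStr P L4 w1 ∧ (L1, L2) ∈ S' ∧
      WRule.mat L2 a L3 b L5 ∈ P ∧ Accepts P {(L1, L5)} T' w2) := by
  cases h with
  | bot L1 L2 h hd => exact Or.inl ⟨rfl, L1, L2, h, hd⟩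
  | push b L1 L2 L3 L4 L5 h34 hd h12 hrule hrec =>
    exact Or.inr ⟨_, _, _, _, b, _, L1, L2, L3, L4, L5, rfl, rfl, h34, hd, h12, hrule, hrec⟩

lemma accepts_nil_iff {S : PState N} {T : PStack N Ca} :
    Accepts P S T ([] : List (VTerm Pl Ca Re)) ↔
      T = [] ∧ ∃ L L', (L, L') ∈ S ∧ WRule.eps L' ∈ P := by
  constructor
  · intro h
    rcases accepts_inv h with ⟨rfl, L1, L2, h, hd⟩ |
      ⟨S', a, T', w1, b, w2, L1, L2, L3, L4, L5, rfl, hw, h34, hd, h12, hrule, hrec⟩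
    · exact ⟨rfl, L1, L2, h, derivesStr_nil_iff.mp hd⟩
    · exact absurd hw.symm (by simp)
  · rintro ⟨rfl, L, L', h, heps⟩
    exact Accepts.bot L L' h (derivesStr_nil_iff.mpr heps)

lemma accepts_pl_iff {S : PState N} {T : PStack N Ca} {c : Pl} {w : List (VTerm Pl Ca Re)} :
    Accepts P S T (VTerm.pl c :: w) ↔ Accepts P (deltaPlain P c S) T w := by
  constructor
  · intro h
    rcases accepts_inv h with ⟨rfl, L1, L2, h, hd⟩ |
      ⟨S', a, T', w1, b, w2, L1, L2, L3, L4, L5, rfl, hw, h34, hd, h12, hrule, hrec⟩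
    · obtain ⟨L3, hrule, hd'⟩ := derivesStr_pl_iff.mp hd
      exact Accepts.bot L1 L3 ⟨L2, h, hrule⟩ hd'
    · cases w1 with
      | nil => simp at hw
      | cons x w1 =>
        rw [List.cons_append] at hw
        injection hw with hx hw'
        obtain ⟨L4', hrule', hd'⟩ := derivesStr_pl_iff.mp (hx ▸ hd)
        rw [hw']
        exact Accepts.push b L1 L2 L3 L4' L5 ⟨L4, h34, hrule'⟩ hd' h12 hrule hrec
  · intro h
    rcases accepts_inv h with ⟨rfl, L1, L3, h, hd⟩ |
      ⟨S', a, T', w1, b, w2, L1, L2, L3, L4, L5, rfl, hw, h34, hd, h12, hrule, hrec⟩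
    · obtain ⟨L2, h12, hrule⟩ := h
      exact Accepts.bot L1 L2 h12 (derivesStr_pl_iff.mpr ⟨L3, hrule, hd⟩)
    · obtain ⟨M, h3M, hruleM⟩ := h34
      rw [hw, ← List.cons_append]
      exact Accepts.push b L1 L2 L3 M L5 h3M
        (derivesStr_pl_iff.mpr ⟨L4, hruleM, hd⟩) h12 hrule hrec

lemma accepts_ca_iff {S : PState N} {T : PStack N Ca} {a : Ca} {w : List (VTerm Pl Ca Re)} :
    Accepts P S T (VTerm.ca a :: w) ↔ Accepts P (deltaCall P a S) ((S, a) :: T) w := by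
  constructor
  · intro h
    rcases accepts_inv h with ⟨rfl, L1, L2, h12, hd⟩ |
      ⟨S', a', T', w1, b', w2, L1, L2, L3, L4, L5, rfl, hw, h34, hd, h12, hrule, hrec⟩
    · obtain ⟨L3, b, L4, w1, w2, hrule, hw, hd1, hd2⟩ := derivesStr_ca_iff.mp hd
      rw [hw]
      exact Accepts.push b L1 L2 L3 L3 L4
        ⟨L1, L2, L3, L4, b, rfl, h12, hrule⟩ hd1 h12 hrule
        (Accepts.bot L1 L4 rfl hd2)
    · cases w1 with
      | nil => simp at hw
      | cons x w1 =>
        rw [List.cons_append] at hw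
        injection hw with hx hw'
        obtain ⟨L3', b'', L4', u1, u2, hrule2, hw1, hdu1, hdu2⟩ :=
          derivesStr_ca_iff.mp (hx ▸ hd)
        rw [hw', hw1, List.append_assoc, List.cons_append]
        exact Accepts.push b'' L3 L4 L3' L3' L4'
          ⟨L3, L4, L3', L4', b'', rfl, h34, hrule2⟩ hdu1 h34 hrule2
          (Accepts.push b' L1 L2 L3 L4' L5 rfl hdu2 h12 hrule hrec)
  · intro h
    rcases accepts_inv h with ⟨hT, _⟩ |
      ⟨S1, a1, T1, w1, b, w2, L1, L2, L3, L4, L5, hT, hw, h34, hd, h12, hrule, hrec⟩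
    · simp at hT
    · injection hT with hS hT'
      injection hS with hS ha
      subst hS ha hT' hw
      obtain ⟨M1, M2, M3, M4, b0, heq, hM, hruleM⟩ := h34
      obtain ⟨hL3, hL4⟩ := Prod.mk.injEq .. ▸ heq
      rw [hL4.trans hL3.symm] at hd
      rw [hL3.symm] at hruleM
      rcases accepts_inv hrec with ⟨rfl, X, Y, hXY, hd5⟩ |
        ⟨S2, a2, T2, u1, b2, u2, K1, K2, X, Y, K5, rfl, hw2, hXY, hd5, h12b, hruleb, hrecb⟩
      · simp only [Set.mem_singleton_iff, Prod.mk.injEq] at hXY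
        obtain ⟨rfl, rfl⟩ := hXY
        exact Accepts.bot X L2 h12
          (derivesStr_ca_iff.mpr ⟨L3, b, Y, w1, w2, hrule, rfl, hd, hd5⟩)
      · simp only [Set.mem_singleton_iff, Prod.mk.injEq] at hXY
        obtain ⟨rfl, rfl⟩ := hXY
        rw [hw2]
        have : VTerm.ca a :: (w1 ++ VTerm.re b :: (u1 ++ VTerm.re b2 :: u2)) =
            (VTerm.ca a :: (w1 ++ VTerm.re b :: u1)) ++ VTerm.re b2 :: u2 := by
          simp [List.append_assoc]
        rw [this]
        exact Accepts.push b2 K1 K2 X L2 K5 h12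
          (derivesStr_ca_iff.mpr ⟨L3, b, Y, w1, u1, hrule, rfl, hd, hd5⟩)
          h12b hruleb hrecb

lemma not_accepts_re_nil {S : PState N} {b : Re} {w : List (VTerm Pl Ca Re)} :
    ¬ Accepts P S ([] : PStack N Ca) (VTerm.re b :: w) := by
  intro h
  rcases accepts_inv h with ⟨_, L1, L2, _, hd⟩ |
    ⟨S', a, T', w1, b', w2, L1, L2, L3, L4, L5, hT, _⟩
  · exact not_derivesStr_re hd
  · simp at hT

lemma accepts_re_iff {S S1 : PState N} {a : Ca} {T : PStack N Ca} {b : Re}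
    {w : List (VTerm Pl Ca Re)} :
    Accepts P S ((S1, a) :: T) (VTerm.re b :: w) ↔
      Accepts P (deltaRet P b S S1 a) T w := by
  constructor
  · intro h
    rcases accepts_inv h with ⟨hT, _⟩ |
      ⟨S', a', T', w1, b', w2, L1, L2, L3, L4, L5, hT, hw, h34, hd, h12, hrule, hrec⟩
    · simp at hT
    · injection hT with hS hT'
      injection hS with hS ha
      subst hS ha hT'
      cases w1 with
      | cons x w1 =>
        rw [List.cons_append] at hw
        injection hw with hx hw'
        exact absurd (hx ▸ hd) not_derivesStr_re
      | nil =>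
        rw [List.nil_append] at hw
        injection hw with hb hw'
        injection hb with hb
        subst hb hw'
        have heps : WRule.eps L4 ∈ P := derivesStr_nil_iff.mp hd
        exact hrec.mono (by rintro q rfl; exact ⟨L1, L2, L3, L4, L5, rfl, h12, h34, heps, hrule⟩)
  · intro h
    rcases accepts_inv h with ⟨rfl, X, Y, hXY, hd5⟩ |
      ⟨S2, a2, T2, w1, b2, w2, K1, K2, X, Y, K5, rfl, hw, hXY, hd5, h12b, hruleb, hrecb⟩
    · obtain ⟨L1, L2, L3, L4, L5, heq, h12, h34, heps, hrule⟩ := hXY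
      obtain ⟨rfl, rfl⟩ := Prod.mk.injEq .. ▸ heq
      exact Accepts.push b X L2 L3 L4 Y h34 (derivesStr_nil_iff.mpr heps) h12 hrule
        (Accepts.bot X Y rfl hd5)
    · obtain ⟨L1, L2, L3, L4, L5, heq, h12, h34, heps, hrule⟩ := hXY
      obtain ⟨rfl, rfl⟩ := Prod.mk.injEq .. ▸ heq
      rw [hw]
      have : VTerm.re b :: (w1 ++ VTerm.re b2 :: w2) =
          [] ++ VTerm.re b :: (w1 ++ VTerm.re b2 :: w2) := rfl
      rw [this]
      exact Accepts.push b X L2 L3 L4 Y h34 (derivesStr_nil_iff.mpr heps) h12 hrule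
        (Accepts.push b2 K1 K2 X Y K5 rfl hd5 h12b hruleb hrecb)

/-- Main equivalence between declarative acceptance and running the PDA. -/
lemma accepts_iff_run (w : List (VTerm Pl Ca Re)) :
    ∀ (S : PState N) (T : PStack N Ca),
      Accepts P S T w ↔ ∃ cfg, run P w (S, T) = some cfg ∧ AccConfig P cfg := by
  induction w with
  | nil =>
    intro S T
    rw [accepts_nil_iff]
    constructor
    · rintro ⟨rfl, L, L', h, heps⟩
      exact ⟨(S, []), rfl, rfl, L, L', h, heps⟩
    · rintro ⟨cfg, hcfg, hacc⟩
      rw [show run P [] (S, T) = some (S, T) from rfl] at hcfg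
      injection hcfg with hcfg
      subst hcfg
      exact ⟨hacc.1, hacc.2⟩
  | cons i w ih =>
    intro S T
    cases i with
    | pl c =>
      rw [accepts_pl_iff,
        show run P (VTerm.pl c :: w) (S, T) = run P w (deltaPlain P c S, T) from rfl]
      exact ih _ _
    | ca a =>
      rw [accepts_ca_iff,
        show run P (VTerm.ca a :: w) (S, T) = run P w (deltaCall P a S, (S, a) :: T) from rfl]
      exact ih _ _
    | re b =>
      cases T with
      | nil =>
        rw [show run P (VTerm.re b :: w) (S, []) = none from rfl]
        constructor
        · intro h
          exact absurd h not_accepts_re_nil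
        · rintro ⟨cfg, hcfg, _⟩
          simp at hcfg
      | cons p T =>
        obtain ⟨S1, a⟩ := p
        rw [accepts_re_iff,
          show run P (VTerm.re b :: w) (S, (S1, a) :: T) =
            run P w (deltaRet P b S S1 a, T) from rfl]
        exact ih _ _

/-- Acceptance equivalence for the constructed recognizer PDA. -/
theorem accepts_iff_pdaAccepts (P : Set (WRule N Pl Ca Re)) (L0 : N)
    (w : List (VTerm Pl Ca Re)) :
    Accepts P {(L0, L0)} ([] : PStack N Ca) w ↔ PDAAccepts P L0 w := by
  exact accepts_iff_run w {(L0, L0)} []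

end VPG
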